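/- Let G be a graph containing a matching of size at least 3. If G has a proper coloring using χ(G) colors in which at least three color classes have size at least 2, then B(G) ≥ 3. -/

import Mathlib

open Finset

variable {V : Type*}

/-- A proper coloring given as a function to ℕ. -/
def IsProperColoring (G : SimpleGraph V) (c : V → ℕ) : Prop :=
  ∀ ⦃u v⦄, G.Adj u v → c u ≠ c v

variable [Fintype V] [DecidableEq V]

/-- Two colorings use every color the same number of times. -/
def SameColorCounts (c c' : V → ℕ) : Prop :=
  ∀ k : ℕ, (univ.filter fun v => c v = k).card = (univ.filter fun v => c' v = k).card

/-- The number of vertices on which two colorings differ. -/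
def recolorCount (c c' : V → ℕ) : ℕ := (univ.filter fun v => c v ≠ c' v).card

/-- The ℕ-valued chromatic number. -/
noncomputable def chromNum (G : SimpleGraph V) : ℕ := G.chromaticNumber.toNat

/-- A proper coloring of `G` using exactly `χ(G)` colors. -/
noncomputable def IsOptimalColoring (G : SimpleGraph V) (f : V → ℕ) : Prop :=
  IsProperColoring G f ∧ (univ.image f).card = chromNum G

/-- The villainy of a coloring `c`: the least number of vertices that must be
recolored to obtain a proper coloring using each color as often as `c` does. -/
noncomputable def colVillainy (G : SimpleGraph V) (c : V → ℕ) : ℕ :=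
  sInf {n | ∃ c', IsProperColoring G c' ∧ SameColorCounts c c' ∧ recolorCount c c' = n}

/-- `c` is a permutation of the coloring `f`. -/
def IsPermutationOf (c f : V → ℕ) : Prop := ∃ σ : Equiv.Perm V, c = f ∘ σ

/-- The villainy of `G`: the maximum villainy over all permutations of optimal
proper colorings of `G`. -/
noncomputable def villainy (G : SimpleGraph V) : ℕ :=
  sSup {n | ∃ f c, IsOptimalColoring G f ∧ IsPermutationOf c f ∧ colVillainy G c = n}

/-!
Permute the optimal coloring `f` so that each of the three matching edges is sent onto two
vertices of one of the three large color classes. The permuted coloring `c` makes the three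
disjoint edges monochromatic, so every proper coloring has to change the color of at least one
endpoint of each of them and differs from `c` in at least three vertices. Since `f` itself is a
proper coloring with the color counts of `c`, the infimum defining the villainy of `c` is over a
nonempty set and is therefore at least three.
-/

omit [DecidableEq V] in
lemma sameColorCounts_comp_perm (f : V → ℕ) (σ : Equiv.Perm V) :
    SameColorCounts (f ∘ σ) f := fun k =>
  card_bij (fun v _ => σ v) (by simp) (fun _ _ _ _ h => σ.injective h)
    (fun w hw => ⟨σ.symm w, by simpa using hw, by simp⟩)

omit [DecidableEq V] in
lemma colVillainy_le_recolorCount {G : SimpleGraph V} {c c' : V → ℕ}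
    (hc' : IsProperColoring G c') (hcc' : SameColorCounts c c') :
    colVillainy G c ≤ recolorCount c c' :=
  Nat.sInf_le ⟨c', hc', hcc', rfl⟩

omit [DecidableEq V] in
lemma le_colVillainy {G : SimpleGraph V} {c : V → ℕ} {n : ℕ}
    (hne : ∃ c', IsProperColoring G c' ∧ SameColorCounts c c')
    (h : ∀ c', IsProperColoring G c' → n ≤ recolorCount c c') :
    n ≤ colVillainy G c := by
  obtain ⟨c', hc', hcc'⟩ := hne
  refine le_csInf ⟨_, c', hc', hcc', rfl⟩ ?_
  rintro _ ⟨c'', hc'', -, rfl⟩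
  exact h c'' hc''

omit [DecidableEq V] in
lemma colVillainy_comp_perm_le_villainy {G : SimpleGraph V} {f : V → ℕ}
    (hf : IsOptimalColoring G f) (σ : Equiv.Perm V) :
    colVillainy G (f ∘ σ) ≤ villainy G := by
  refine le_csSup ⟨Fintype.card V, ?_⟩ ⟨f, f ∘ σ, hf, ⟨σ, rfl⟩, rfl⟩
  rintro _ ⟨f₀, _, hf₀, ⟨σ₀, rfl⟩, rfl⟩
  exact (colVillainy_le_recolorCount hf₀.1 (sameColorCounts_comp_perm f₀ σ₀)).trans
    (card_filter_le _ _)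

omit [DecidableEq V] in
lemma card_le_recolorCount_of_matching {ι : Type*} [Fintype ι] {G : SimpleGraph V}
    {a b : ι → V} (hab : Function.Injective (Sum.elim a b)) (hadj : ∀ i, G.Adj (a i) (b i))
    {c c' : V → ℕ} (hc : ∀ i, c (a i) = c (b i)) (hc' : IsProperColoring G c') :
    Fintype.card ι ≤ recolorCount c c' := by
  let changedEnd : ι → ι ⊕ ι := fun i => if c (a i) = c' (a i) then .inr i else .inl i
  have hchangedEndinj : Function.Injective changedEnd := by
    intro i j h
    simp only [changedEnd] at h
    split_ifs at h <;> simpa using h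
  have hchangedEndchanged : ∀ i, c (Sum.elim a b (changedEnd i)) ≠ c' (Sum.elim a b (changedEnd i)) := by
    intro i
    by_cases hi : c (a i) = c' (a i)
    · simp only [changedEnd, if_pos hi, Sum.elim_inr]
      exact fun hbi => hc' (hadj i) (by rw [← hi, ← hbi, hc])
    · simp [changedEnd, hi]
  rw [← card_univ]
  exact card_le_card_of_injOn _ (fun i _ => by simpa using hchangedEndchanged i)
    (hab.comp hchangedEndinj).injOn

lemma injective_sum_elim_of_colorClasses {α β ι : Type*} {f : α → β} {k : ι → β}
    (hk : Function.Injective k) {u v : ι → α} (hu : ∀ i, f (u i) = k i)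
    (hv : ∀ i, f (v i) = k i) (huv : ∀ i, u i ≠ v i) :
    Function.Injective (Sum.elim u v) := by
  have hk' : ∀ {x y i j}, x = y → f x = k i → f y = k j → i = j :=
    fun hxy hx hy => hk (hx ▸ hy ▸ congrArg f hxy)
  rintro (i | i) (j | j) h <;> simp only [Sum.elim_inl, Sum.elim_inr, Sum.inl.injEq,
    Sum.inr.injEq, reduceCtorEq] at h ⊢
  · exact hk' h (hu i) (hu j)
  · exact huv i (hk' h (hu i) (hv j) ▸ h)
  · exact huv j (hk' h (hv i) (hu j) ▸ h).symm
  · exact hk' h (hv i) (hv j)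

omit [DecidableEq V] in
lemma exists_perm_monochromatic {ι : Type*} [Finite ι] {a b : ι → V}
    (hab : Function.Injective (Sum.elim a b)) {β : Type*} [DecidableEq β] {f : V → β} {k : ι → β}
    (hk : Function.Injective k) (hcls : ∀ i, 2 ≤ (univ.filter fun x => f x = k i).card) :
    ∃ σ : Equiv.Perm V, ∀ i, (f ∘ σ) (a i) = (f ∘ σ) (b i) := by
  choose u hu v hv huv using fun i => one_lt_card.mp (hcls i)
  simp only [mem_filter, mem_univ, true_and] at hu hv
  obtain ⟨σ, hσ⟩ := Equiv.Perm.exists_extending_pair _ _ hab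
    (injective_sum_elim_of_colorClasses hk hu hv huv)
  refine ⟨σ, fun i => ?_⟩
  have hσa : σ (a i) = u i := hσ (.inl i)
  have hσb : σ (b i) = v i := hσ (.inr i)
  simp only [Function.comp_apply, hσa, hσb, hu, hv]

theorem villainy_ge_three_of_matching (G : SimpleGraph V)
    (a₁ b₁ a₂ b₂ a₃ b₃ : V)
    (hdist : ({a₁, b₁, a₂, b₂, a₃, b₃} : Finset V).card = 6)
    (h₁ : G.Adj a₁ b₁) (h₂ : G.Adj a₂ b₂) (h₃ : G.Adj a₃ b₃)
    (f : V → ℕ) (hf : IsOptimalColoring G f) (k₁ k₂ k₃ : ℕ)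
    (h12 : k₁ ≠ k₂) (h13 : k₁ ≠ k₃) (h23 : k₂ ≠ k₃)
    (hk₁ : 2 ≤ (univ.filter fun x => f x = k₁).card)
    (hk₂ : 2 ≤ (univ.filter fun x => f x = k₂).card)
    (hk₃ : 2 ≤ (univ.filter fun x => f x = k₃).card) :
    3 ≤ villainy G := by
  set a : Fin 3 → V := ![a₁, a₂, a₃]
  set b : Fin 3 → V := ![b₁, b₂, b₃]
  have hab : Function.Injective (Sum.elim a b) := by
    have himage : univ.image (Sum.elim a b) = {a₁, b₁, a₂, b₂, a₃, b₃} := by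
      ext x
      simp [a, b, Fin.exists_fin_succ, eq_comm, or_comm, or_left_comm]
    have hinjOn := card_image_iff.mp (by rw [himage, hdist]; rfl)
    simpa using hinjOn
  have hk : Function.Injective ![k₁, k₂, k₃] := by
    intro i j
    fin_cases i <;> fin_cases j <;> simp [h12, h13, h23, h12.symm, h13.symm, h23.symm]
  obtain ⟨σ, hσ⟩ := exists_perm_monochromatic (f := f) hab hk
    (fun i => by fin_cases i <;> assumption)
  calc 3 = Fintype.card (Fin 3) := rfl
    _ ≤ colVillainy G (f ∘ σ) :=
      le_colVillainy ⟨f, hf.1, sameColorCounts_comp_perm f σ⟩ fun _ hc' =>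
        card_le_recolorCount_of_matching hab
          (by simp [a, b, Fin.forall_fin_succ, h₁, h₂, h₃]) hσ hc'
    _ ≤ villainy G := colVillainy_comp_perm_le_villainy hf σ
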